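/- Fix s ≥ 0 and suppose M^s(Σ^∞) > 0. Then there exist a Borel measure μ on Σ^∞ with 0 < μ(Σ^∞) < ∞ and a constant c > 0 such that μ(C_u) ≤ c·φ^s(T_u) for every u ∈ Σ^*. -/

import Mathlib

open Filter MeasureTheory Set
open scoped ENNReal NNReal Topology

noncomputable section

namespace MoranPaper


/-- `ℝ^d` as a Euclidean space. -/
abbrev Rd (d : ℕ) := EuclideanSpace ℝ (Fin d)

theorem isHermitian_transpose_mul_self {d : ℕ} (T : Matrix (Fin d) (Fin d) ℝ) :
    (Matrix.transpose T * T).IsHermitian := by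
  simpa using Matrix.isHermitian_conjTranspose_mul_self T

/-- The singular values of a `d × d` real matrix, in decreasing order, `0`-indexed:
`sv d T 0 = α₁(T)` is the largest singular value, `sv d T (d-1) = α_d(T)` the smallest.
(Junk value `0` for indices `≥ d`.) -/
def sv (d : ℕ) (T : Matrix (Fin d) (Fin d) ℝ) (m : ℕ) : ℝ :=
  if h : m < d then
    (fun j => Real.sqrt ((isHermitian_transpose_mul_self T).eigenvalues j))
      (Tuple.sort
        (fun j => Real.sqrt ((isHermitian_transpose_mul_self T).eigenvalues j))
        (Fin.rev ⟨m, h⟩))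
  else 0

/-- The singular value function `φ^s(T)`: for `0 < s ≤ d` with `m - 1 < s ≤ m`,
`φ^s(T) = α₁(T)⋯α_{m-1}(T)·α_m(T)^{s-m+1}`; `φ^0(T) = 1`; for `s > d`,
`φ^s(T) = (α₁(T)⋯α_d(T))^{s/d} = |det T|^{s/d}`. -/
def phi (d : ℕ) (T : Matrix (Fin d) (Fin d) ℝ) (s : ℝ) : ℝ :=
  if s ≤ 0 then 1
  else if s ≤ d then
    (∏ i ∈ Finset.range (⌈s⌉₊ - 1), sv d T i) * sv d T (⌈s⌉₊ - 1) ^ (s - ⌈s⌉₊ + 1)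
  else (∏ i ∈ Finset.range d, sv d T i) ^ (s / d)

variable (n : ℕ → ℕ)

/-- Finite words of length `k`: `Σ^k` (`0`-indexed levels: position `i` uses alphabet `Fin (n i)`). -/
abbrev Word (k : ℕ) := ∀ i : Fin k, Fin (n i)

/-- All finite words: `Σ^*`. -/
abbrev FinWord := Σ k : ℕ, Word n k

/-- Infinite words: `Σ^∞`. -/
abbrev InfWord := ∀ k : ℕ, Fin (n k)

/-- Drop the last letter of a word: `u ↦ u⁻`. -/
def wInit {k : ℕ} (u : Word n (k + 1)) : Word n k := fun i => u i.castSucc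

/-- The initial word `u|k` of an infinite word `u`. -/
def wTake (u : InfWord n) (k : ℕ) : Word n k := fun i => u i

/-- The cylinder `C_u ⊆ Σ^∞` of a finite word `u`. -/
def cylinder {k : ℕ} (u : Word n k) : Set (InfWord n) := {v | ∀ i : Fin k, v i = u i}

/-- The length of the maximal common initial word `u ∧ v` of two infinite words. -/
def meetLen (u v : InfWord n) : ℕ := sInf {k : ℕ | u k ≠ v k}

variable {d : ℕ} (T : ∀ k : ℕ, Fin (n k) → Matrix (Fin d) (Fin d) ℝ)

/-- `T_u = T_{1,u_1} T_{2,u_2} ⋯ T_{k,u_k}` for a finite word `u`. -/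
def Tword {k : ℕ} (u : Word n k) : Matrix (Fin d) (Fin d) ℝ :=
  (List.ofFn fun i : Fin k => T i (u i)).prod

/-- The sum `Σ_{u ∈ A} φ^s(T_u)` over a set of finite words, valued in `ℝ≥0∞`. -/
def covSum (s : ℝ) (A : Set (FinWord n)) : ℝ≥0∞ :=
  ∑' u : A, ENNReal.ofReal (phi d (Tword n T u.1.2) s)

/-- The premeasure `M^s_{(k)}(G)`: infimum of `Σ_u φ^s(T_u)` over covers of `G` by cylinders
of words of length at least `k`. -/
def Mk (s : ℝ) (k : ℕ) (G : Set (InfWord n)) : ℝ≥0∞ :=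
  ⨅ (A : Set (FinWord n)) (_ : ∀ u ∈ A, k ≤ u.1)
    (_ : G ⊆ ⋃ u ∈ A, cylinder n u.2), covSum n T s A

/-- The net measure `M^s(G) = lim_{k → ∞} M^s_{(k)}(G)` (the limit of the nondecreasing
sequence `M^s_{(k)}(G)`, i.e. its supremum). -/
def Mnet (s : ℝ) (G : Set (InfWord n)) : ℝ≥0∞ := ⨆ k : ℕ, Mk n T s k G

/-- The critical value `s_A = inf {s : M^s(Σ^∞) = 0}`. -/
def sA : ℝ := sInf {s : ℝ | Mnet n T s univ = 0}

/-- The cut-set `Σ^*(s, ε)`: words `u` (of positive length) with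
`α_m(T_{u⁻}) > ε` and `α_m(T_u) ≤ ε`, where `m - 1 < s ≤ m`. -/
def cutSet (s ε : ℝ) : Set (FinWord n) :=
  {w | ∃ (k : ℕ) (u : Word n (k + 1)), w = ⟨k + 1, u⟩ ∧
    ε < sv d (Tword n T (wInit n u)) (⌈s⌉₊ - 1) ∧ sv d (Tword n T u) (⌈s⌉₊ - 1) ≤ ε}

/-- `Σ_{u ∈ Σ^*(s,ε)} φ^s(T_u)`. -/
def cutSum (s ε : ℝ) : ℝ≥0∞ := covSum n T s (cutSet n T s ε)

/-- The critical value `s^* = inf {s > 0 : limsup_{ε → 0⁺} Σ_{u ∈ Σ^*(s,ε)} φ^s(T_u) < ∞}`. -/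
def sStar : ℝ :=
  sInf {s : ℝ | 0 < s ∧ limsup (fun ε : ℝ => cutSum n T s ε) (𝓝[>] 0) < ⊤}

/-- `N_ε(A)`: the smallest number of sets of diameter at most `ε` needed to cover `A`
(`∞` if there is no such finite cover), valued in `ℝ≥0∞`. -/
def Ncov {X : Type*} [PseudoEMetricSpace X] (A : Set X) (ε : ℝ) : ℝ≥0∞ :=
  ⨅ (C : Finset (Set X)) (_ : A ⊆ ⋃ c ∈ C, c)
    (_ : ∀ c ∈ C, EMetric.diam c ≤ ENNReal.ofReal ε), (C.card : ℝ≥0∞)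

/-- The upper box-counting dimension: `limsup_{ε → 0⁺} log N_ε(A) / (- log ε)`. -/
def ubDim {X : Type*} [PseudoEMetricSpace X] (A : Set X) : ℝ :=
  limsup (fun ε : ℝ => Real.log (Ncov A ε).toReal / (-Real.log ε)) (𝓝[>] 0)

/-- The lower box-counting dimension: `liminf_{ε → 0⁺} log N_ε(A) / (- log ε)`. -/
def lbDim {X : Type*} [PseudoEMetricSpace X] (A : Set X) : ℝ :=
  liminf (fun ε : ℝ => Real.log (Ncov A ε).toReal / (-Real.log ε)) (𝓝[>] 0)

section Moran

variable (ω : ∀ k : ℕ, Word n (k + 1) → Rd d)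

/-- The affine map `x ↦ T_{k, u_k} x + ω_u` determined by the last letter of `u` and the
translation attached to `u`. -/
def stepMap (k : ℕ) (u : Word n (k + 1)) : Rd d → Rd d :=
  fun x => Matrix.toEuclideanLin (T k (u (Fin.last k))) x + ω k u

/-- The composition `Ψ_u = Ψ_{u_1} ∘ ⋯ ∘ Ψ_{u_k}`, where `Ψ_{u_j}(x) = T_{j,u_j} x + ω_{u|j}`. -/
def PsiW : ∀ k : ℕ, Word n k → Rd d → Rd d
  | 0, _ => id
  | (k + 1), u => PsiW k (wInit n u) ∘ stepMap n T ω k u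

/-- The basic set `J_u = Ψ_u(J)`. -/
def Ju (J : Set (Rd d)) (k : ℕ) (u : Word n k) : Set (Rd d) := PsiW n T ω k u '' J

/-- The self-affine Moran set `E = ⋂_{k ≥ 1} ⋃_{u ∈ Σ^k} J_u`. -/
def Eset (J : Set (Rd d)) : Set (Rd d) :=
  ⋂ k : ℕ, ⋃ u : Word n (k + 1), Ju n T ω J (k + 1) u

/-- The Moran structure conditions: `J` is compact with nonempty interior, each `J_{ui}` is a
subset of `J_u`, and the maximal diameter of level-`k` basic sets tends to `0`. -/
def IsMoran (J : Set (Rd d)) : Prop :=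
  IsCompact J ∧ (interior J).Nonempty ∧
    (∀ (k : ℕ) (u : Word n (k + 1)), Ju n T ω J (k + 1) u ⊆ Ju n T ω J k (wInit n u)) ∧
    Tendsto (fun k : ℕ => ⨆ u : Word n k, EMetric.diam (Ju n T ω J k u)) atTop (𝓝 0)

/-- The standing assumptions on the matrices: each `T_{k,j}` is nonsingular, and
`0 < α₋ ≤ α₊ < 1` where `α₋ = inf α_d(T_{k,j})` and `α₊ = sup α₁(T_{k,j})`. -/
def GoodMatrices : Prop :=
  (∀ (k : ℕ) (j : Fin (n k)), (T k j).det ≠ 0) ∧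
    ∃ am ap : ℝ, 0 < am ∧ ap < 1 ∧
      ∀ (k : ℕ) (j : Fin (n k)), am ≤ sv d (T k j) (d - 1) ∧ sv d (T k j) 0 ≤ ap

end Moran

/-!
Fix `k₀` with `M^s_{(k₀)}(Σ^∞) > 0` and give each word `u` the capacity `φ^s(T_u)` if
`|u| ≥ k₀` and `∞` otherwise. On the tree truncated at depth `K`, pushing the min-cut value down
from the root in proportion to the min-cuts of the children gives a flow within the capacities;
a limit of these flows along an ultrafilter is a mass distribution `P` (additive over children)
with `P(∅) = inf_K minCut_K(∅) ≥ M^s_{(k₀)}(Σ^∞)`, since every cut is a cover. The net measure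
with weight `P` has `μ(C_u) ≤ P(u)`, and by compactness every cylinder cover of `Σ^∞` has
`P`-weight at least `P(∅)`, so `0 < μ(Σ^∞) < ∞`. The finitely many words shorter than `k₀`
have `φ^s(T_u) > 0` and are absorbed into the constant.
-/

section Words

variable {n : ℕ → ℕ}

def wSnoc {k : ℕ} (v : Word n k) (i : Fin (n k)) : Word n (k + 1) := Fin.snoc v i

@[simp] lemma wInit_wSnoc {k : ℕ} (v : Word n k) (i : Fin (n k)) : wInit n (wSnoc v i) = v := by
  funext j; simp [wInit, wSnoc]

lemma mem_cylinder_iff {k : ℕ} {v : Word n k} {x : InfWord n} :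
    x ∈ cylinder n v ↔ wTake n x k = v :=
  funext_iff.symm

lemma mem_cylinder_wTake (x : InfWord n) (k : ℕ) : x ∈ cylinder n (wTake n x k) :=
  mem_cylinder_iff.2 rfl

lemma wTake_succ (x : InfWord n) (k : ℕ) : wTake n x (k + 1) = wSnoc (wTake n x k) (x k) := by
  funext i
  induction i using Fin.lastCases <;> simp [wTake, wSnoc]

lemma eq_of_mem_cylinder {k : ℕ} {u v : Word n k} {x : InfWord n} (hu : x ∈ cylinder n u)
    (hv : x ∈ cylinder n v) : u = v :=
  (mem_cylinder_iff.1 hu).symm.trans (mem_cylinder_iff.1 hv)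

lemma cylinder_subset_of_mem {j k : ℕ} (hjk : j ≤ k) {u : Word n k} {v : Word n j}
    {x : InfWord n} (hu : x ∈ cylinder n u) (hv : x ∈ cylinder n v) :
    cylinder n u ⊆ cylinder n v := by
  rw [mem_cylinder_iff] at hu hv
  subst hu hv
  exact fun y hy i => hy ⟨i, i.2.trans_le hjk⟩

lemma cylinder_eq_univ (v : Word n 0) : cylinder n v = univ :=
  eq_univ_of_forall fun _ i => i.elim0

lemma cylinder_wSnoc_subset {k : ℕ} (v : Word n k) (i : Fin (n k)) :
    cylinder n (wSnoc v i) ⊆ cylinder n v := fun x hx j => by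
  simpa [wSnoc] using hx j.castSucc

lemma apply_eq_of_mem_cylinder_wSnoc {k : ℕ} {v : Word n k} {i : Fin (n k)} {x : InfWord n}
    (hx : x ∈ cylinder n (wSnoc v i)) : x k = i := by
  simpa [wSnoc] using hx (Fin.last k)

lemma cylinder_subset_iUnion_wSnoc {k : ℕ} (v : Word n k) :
    cylinder n v ⊆ ⋃ i, cylinder n (wSnoc v i) := fun x hx => by
  rw [mem_cylinder_iff] at hx
  subst hx
  exact mem_iUnion.2 ⟨x k, wTake_succ x k ▸ mem_cylinder_wTake x (k + 1)⟩

lemma cylinder_nonempty [Nonempty (InfWord n)] {k : ℕ} (v : Word n k) :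
    (cylinder n v).Nonempty := by
  obtain ⟨y⟩ := ‹Nonempty (InfWord n)›
  exact ⟨fun m => if h : m < k then v ⟨m, h⟩ else y m, fun i => by simp⟩

lemma eq_of_cylinder_subset_wSnoc [Nonempty (InfWord n)] {j k : ℕ} {u : Word n k}
    {v : Word n j} {i i' : Fin (n j)} (hi : cylinder n u ⊆ cylinder n (wSnoc v i))
    (hi' : cylinder n u ⊆ cylinder n (wSnoc v i')) : i = i' := by
  obtain ⟨y, hy⟩ := cylinder_nonempty u
  exact (apply_eq_of_mem_cylinder_wSnoc (hi hy)).symm.trans (apply_eq_of_mem_cylinder_wSnoc (hi' hy))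

lemma cylinder_eq_iInter {k : ℕ} (v : Word n k) :
    cylinder n v = ⋂ i : Fin k, (fun x : InfWord n => x i) ⁻¹' {v i} := by
  ext x
  simp [cylinder]

lemma isOpen_cylinder {k : ℕ} (v : Word n k) : IsOpen (cylinder n v) := by
  rw [cylinder_eq_iInter]
  exact isOpen_iInter_of_finite fun i => (isOpen_discrete _).preimage (continuous_apply _)

lemma measurableSet_cylinder {k : ℕ} (v : Word n k) : MeasurableSet (cylinder n v) := by
  rw [cylinder_eq_iInter]
  exact MeasurableSet.iInter fun i => measurable_pi_apply _ (measurableSet_singleton _)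

end Words

section NetMeasure

variable {n : ℕ → ℕ} (q : FinWord n → ℝ≥0∞)

/-- `Mk n T s k` is `netPremeasure (fun w => ENNReal.ofReal (phi d (Tword n T w.2) s)) k`
definitionally. -/
def netPremeasure (k : ℕ) (G : Set (InfWord n)) : ℝ≥0∞ :=
  ⨅ (A : Set (FinWord n)) (_ : ∀ u ∈ A, k ≤ u.1) (_ : G ⊆ ⋃ u ∈ A, cylinder n u.2), ∑' u : A, q u

variable {q}

lemma netPremeasure_le_tsum {k : ℕ} {G : Set (InfWord n)} {A : Set (FinWord n)}
    (hA : ∀ u ∈ A, k ≤ u.1) (hG : G ⊆ ⋃ u ∈ A, cylinder n u.2) :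
    netPremeasure q k G ≤ ∑' u : A, q u :=
  iInf₂_le_of_le A hA (iInf_le _ hG)

lemma netPremeasure_mono {k k' : ℕ} {G G' : Set (InfWord n)} (hk : k ≤ k') (hG : G ⊆ G') :
    netPremeasure q k G ≤ netPremeasure q k' G' :=
  le_iInf₂ fun _ hA => le_iInf fun hG' =>
    netPremeasure_le_tsum (fun u hu => hk.trans (hA u hu)) (hG.trans hG')

variable (q) in
lemma netPremeasure_empty (k : ℕ) : netPremeasure q k ∅ = 0 :=
  nonpos_iff_eq_zero.1 <|
    (netPremeasure_le_tsum (A := ∅) (fun _ h => h.elim) (empty_subset _)).trans_eq tsum_empty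

variable (q) in
lemma netPremeasure_iUnion_le {ι : Type*} [Countable ι] (k : ℕ) (G : ι → Set (InfWord n)) :
    netPremeasure q k (⋃ i, G i) ≤ ∑' i, netPremeasure q k (G i) := by
  refine ENNReal.le_of_forall_pos_le_add fun ε hε hfin => ?_
  obtain ⟨δ, hδ, hδε⟩ := ENNReal.exists_pos_sum_of_countable (ENNReal.coe_ne_zero.2 hε.ne') ι
  have hcover : ∀ i, ∃ A : Set (FinWord n), (∀ u ∈ A, k ≤ u.1) ∧
      (G i ⊆ ⋃ u ∈ A, cylinder n u.2) ∧ ∑' u : A, q u < netPremeasure q k (G i) + δ i := by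
    intro i
    have hlt : netPremeasure q k (G i) < netPremeasure q k (G i) + δ i :=
      ENNReal.lt_add_right (ne_top_of_le_ne_top hfin.ne (ENNReal.le_tsum i))
        (ENNReal.coe_ne_zero.2 (hδ i).ne')
    simpa only [netPremeasure, iInf_lt_iff, exists_prop] using hlt
  choose A hAk hAG hAq using hcover
  calc netPremeasure q k (⋃ i, G i)
      ≤ ∑' u : ⋃ i, A i, q u := netPremeasure_le_tsum
        (fun u hu => (mem_iUnion.1 hu).elim fun i hi => hAk i u hi)
        (iUnion_subset fun i => (hAG i).trans
          (biUnion_subset_biUnion_left (subset_iUnion A i)))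
    _ ≤ ∑' i, ∑' u : A i, q u := ENNReal.tsum_iUnion_le_tsum q A
    _ ≤ ∑' i, (netPremeasure q k (G i) + δ i) := ENNReal.tsum_le_tsum fun i => (hAq i).le
    _ = ∑' i, netPremeasure q k (G i) + ∑' i, (δ i : ℝ≥0∞) := ENNReal.tsum_add
    _ ≤ ∑' i, netPremeasure q k (G i) + ε := by gcongr

lemma netPremeasure_inter_add_diff_le {j k : ℕ} (hjk : j ≤ k) (v : Word n j)
    (G : Set (InfWord n)) :
    netPremeasure q k (G ∩ cylinder n v) + netPremeasure q k (G \ cylinder n v) ≤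
      netPremeasure q k G := by
  refine le_iInf₂ fun A hAk => le_iInf fun hAG => ?_
  set B := {u ∈ A | cylinder n u.2 ⊆ cylinder n v}
  have hB : G ∩ cylinder n v ⊆ ⋃ u ∈ B, cylinder n u.2 := by
    rintro x ⟨hxG, hxv⟩
    obtain ⟨u, huA, hxu⟩ := mem_iUnion₂.1 (hAG hxG)
    exact mem_iUnion₂.2 ⟨u, ⟨huA, cylinder_subset_of_mem (hjk.trans (hAk u huA)) hxu hxv⟩, hxu⟩
  have hAB : G \ cylinder n v ⊆ ⋃ u ∈ A \ B, cylinder n u.2 := by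
    rintro x ⟨hxG, hxv⟩
    obtain ⟨u, huA, hxu⟩ := mem_iUnion₂.1 (hAG hxG)
    exact mem_iUnion₂.2 ⟨u, ⟨huA, fun huB => hxv (huB.2 hxu)⟩, hxu⟩
  calc netPremeasure q k (G ∩ cylinder n v) + netPremeasure q k (G \ cylinder n v)
      ≤ ∑' u : B, q u + ∑' u : ↥(A \ B), q u :=
        add_le_add (netPremeasure_le_tsum (fun u hu => hAk u hu.1) hB)
          (netPremeasure_le_tsum (fun u hu => hAk u hu.1) hAB)
    _ = ∑' u : A, q u := by
      rw [← Summable.tsum_union_disjoint disjoint_sdiff_right ENNReal.summable ENNReal.summable,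
        union_sdiff_cancel (sep_subset _ _)]

lemma netPremeasure_cylinder_le_weight {j k : ℕ} (hjk : k ≤ j) (v : Word n j) :
    netPremeasure q k (cylinder n v) ≤ q ⟨j, v⟩ :=
  (netPremeasure_le_tsum (A := {⟨j, v⟩}) (by simpa using hjk) (by simp)).trans_eq
    (tsum_singleton _ q)

lemma netPremeasure_cylinder_le_sum (k : ℕ) {j : ℕ} (v : Word n j) :
    netPremeasure q k (cylinder n v) ≤ ∑ i, netPremeasure q k (cylinder n (wSnoc v i)) :=
  calc netPremeasure q k (cylinder n v)
      ≤ netPremeasure q k (⋃ i, cylinder n (wSnoc v i)) :=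
        netPremeasure_mono le_rfl (cylinder_subset_iUnion_wSnoc v)
    _ ≤ ∑ i, netPremeasure q k (cylinder n (wSnoc v i)) :=
      (netPremeasure_iUnion_le q k _).trans_eq (tsum_fintype _)

lemma nonempty_of_netPremeasure_pos {k : ℕ} {G : Set (InfWord n)}
    (h : 0 < netPremeasure q k G) : G.Nonempty :=
  nonempty_iff_ne_empty.2 fun hG => by simp [hG, netPremeasure_empty] at h

variable (q)

def netOuterMeasure : OuterMeasure (InfWord n) where
  measureOf G := ⨆ k, netPremeasure q k G
  empty := by simp [netPremeasure_empty]
  mono hG := iSup_mono fun _ => netPremeasure_mono le_rfl hG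
  iUnion_nat G _ := iSup_le fun k => (netPremeasure_iUnion_le q k G).trans <|
    ENNReal.tsum_le_tsum fun i => le_iSup (fun k => netPremeasure q k (G i)) k

lemma netOuterMeasure_apply (G : Set (InfWord n)) :
    netOuterMeasure q G = ⨆ k, netPremeasure q k G := rfl

lemma isCaratheodory_cylinder {j : ℕ} (v : Word n j) :
    MeasurableSet[(netOuterMeasure q).caratheodory] (cylinder n v) := by
  refine (OuterMeasure.isCaratheodory_iff_le _).2 fun G => ?_
  simp only [netOuterMeasure_apply]
  rw [ENNReal.iSup_add_iSup fun k k' => ⟨max k k', add_le_add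
    (netPremeasure_mono (le_max_left _ _) le_rfl) (netPremeasure_mono (le_max_right _ _) le_rfl)⟩]
  refine iSup_le fun k => ?_
  calc netPremeasure q k (G ∩ cylinder n v) + netPremeasure q k (G \ cylinder n v)
      ≤ netPremeasure q (max k j) (G ∩ cylinder n v) +
          netPremeasure q (max k j) (G \ cylinder n v) :=
        add_le_add (netPremeasure_mono (le_max_left _ _) le_rfl)
          (netPremeasure_mono (le_max_left _ _) le_rfl)
    _ ≤ netPremeasure q (max k j) G := netPremeasure_inter_add_diff_le (le_max_right _ _) v G
    _ ≤ ⨆ k, netPremeasure q k G := le_iSup (fun k => netPremeasure q k G) _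

lemma pi_le_caratheodory :
    MeasurableSpace.pi ≤ (netOuterMeasure q).caratheodory := by
  refine iSup_le fun k => MeasurableSpace.comap_le_iff_le_map.2 fun S _ => ?_
  have hS : (fun x : InfWord n => x k) ⁻¹' S =
      ⋃ (u : Word n (k + 1)) (_ : u (Fin.last k) ∈ S), cylinder n u := by
    ext x
    simp only [mem_preimage, mem_iUnion, exists_prop]
    refine ⟨fun hx => ⟨wTake n x (k + 1), hx, mem_cylinder_wTake x _⟩, ?_⟩
    rintro ⟨u, hu, hxu⟩
    rwa [← hxu (Fin.last k)] at hu
  rw [MeasurableSpace.map_def, hS]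
  exact MeasurableSet.iUnion fun u => MeasurableSet.iUnion fun _ => isCaratheodory_cylinder q u

def netMeasure : Measure (InfWord n) := (netOuterMeasure q).toMeasure (pi_le_caratheodory q)

lemma netMeasure_apply {G : Set (InfWord n)} (hG : MeasurableSet G) :
    netMeasure q G = ⨆ k, netPremeasure q k G :=
  toMeasure_apply _ _ hG

end NetMeasure

section MassDistribution

variable {n : ℕ → ℕ}

def IsMassDistribution (P : FinWord n → ℝ≥0∞) : Prop :=
  ∀ (j : ℕ) (v : Word n j), ∑ i, P ⟨j + 1, wSnoc v i⟩ = P ⟨j, v⟩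

variable {P : FinWord n → ℝ≥0∞}

lemma IsMassDistribution.netPremeasure_cylinder_le (hP : IsMassDistribution P) (k : ℕ) :
    ∀ (r j : ℕ) (v : Word n j), k ≤ j + r → netPremeasure P k (cylinder n v) ≤ P ⟨j, v⟩
  | 0, _, v, hk => netPremeasure_cylinder_le_weight hk v
  | r + 1, j, v, hk =>
    calc netPremeasure P k (cylinder n v)
        ≤ ∑ i, netPremeasure P k (cylinder n (wSnoc v i)) := netPremeasure_cylinder_le_sum k v
      _ ≤ ∑ i, P ⟨j + 1, wSnoc v i⟩ := Finset.sum_le_sum fun i _ =>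
          hP.netPremeasure_cylinder_le k r (j + 1) _ (by omega)
      _ = P ⟨j, v⟩ := hP j v

lemma IsMassDistribution.netMeasure_cylinder_le (hP : IsMassDistribution P) {j : ℕ}
    (v : Word n j) : netMeasure P (cylinder n v) ≤ P ⟨j, v⟩ := by
  rw [netMeasure_apply P (measurableSet_cylinder v)]
  exact iSup_le fun k => hP.netPremeasure_cylinder_le k k j v (by omega)

/-- Unless `v` itself is in the cover, the cover splits into covers of the children `C_{vi}`
of smaller depth `r`. -/
lemma IsMassDistribution.le_sum_of_cover [Nonempty (InfWord n)] (hP : IsMassDistribution P) :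
    ∀ (r j : ℕ) (v : Word n j) (F : Finset (FinWord n)), (∀ w ∈ F, j ≤ w.1 ∧ w.1 ≤ j + r) →
      cylinder n v ⊆ ⋃ w ∈ F, cylinder n w.2 → P ⟨j, v⟩ ≤ ∑ w ∈ F, P w := by
  classical
  intro r j v F hF hcov
  by_cases hvF : ⟨j, v⟩ ∈ F
  · exact Finset.single_le_sum (fun _ _ => zero_le) hvF
  have hlong : ∀ x ∈ cylinder n v, ∀ w ∈ F, x ∈ cylinder n w.2 → j + 1 ≤ w.1 := by
    rintro x hxv ⟨K, u⟩ hwF hxu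
    by_contra! hK
    obtain rfl : K = j := by
      have : j ≤ K := (hF _ hwF).1
      have : K < j + 1 := hK
      omega
    exact hvF (eq_of_mem_cylinder hxu hxv ▸ hwF)
  obtain ⟨x, hx⟩ := cylinder_nonempty v
  obtain ⟨w, hwF, hxw⟩ := mem_iUnion₂.1 (hcov hx)
  obtain ⟨r, rfl⟩ : ∃ r', r = r' + 1 :=
    Nat.exists_eq_add_one.2 (by have := (hF w hwF).2; have := hlong x hx w hwF hxw; omega)
  let Fi (i : Fin (n j)) : Finset (FinWord n) :=
    F.filter fun w => j + 1 ≤ w.1 ∧ cylinder n w.2 ⊆ cylinder n (wSnoc v i)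
  have hchild (i : Fin (n j)) : P ⟨j + 1, wSnoc v i⟩ ≤ ∑ w ∈ Fi i, P w := by
    refine hP.le_sum_of_cover r (j + 1) _ _ (fun w hw => ?_) fun y hy => ?_
    · have := (hF w (Finset.mem_filter.1 hw).1).2
      exact ⟨(Finset.mem_filter.1 hw).2.1, by omega⟩
    · have hyv := cylinder_wSnoc_subset v i hy
      obtain ⟨w, hwF, hyw⟩ := mem_iUnion₂.1 (hcov hyv)
      have hw := hlong y hyv w hwF hyw
      exact mem_iUnion₂.2 ⟨w, Finset.mem_filter.2 ⟨hwF, hw, cylinder_subset_of_mem hw hyw hy⟩, hyw⟩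
  have hdisj : Pairwise (Function.onFun Disjoint Fi) := fun i i' hii' =>
    Finset.disjoint_left.2 fun w hwi hwi' => hii' <|
      eq_of_cylinder_subset_wSnoc (Finset.mem_filter.1 hwi).2.2 (Finset.mem_filter.1 hwi').2.2
  calc P ⟨j, v⟩ = ∑ i, P ⟨j + 1, wSnoc v i⟩ := (hP j v).symm
    _ ≤ ∑ i, ∑ w ∈ Fi i, P w := Finset.sum_le_sum fun i _ => hchild i
    _ = ∑ w ∈ Finset.univ.biUnion Fi, P w := (Finset.sum_biUnion (hdisj.set_pairwise _)).symm
    _ ≤ ∑ w ∈ F, P w := Finset.sum_le_sum_of_subset fun w hw => by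
      obtain ⟨i, -, hwi⟩ := Finset.mem_biUnion.1 hw
      exact (Finset.mem_filter.1 hwi).1

lemma IsMassDistribution.le_tsum_of_cover [Nonempty (InfWord n)] (hP : IsMassDistribution P)
    (v : Word n 0) {A : Set (FinWord n)} (hA : univ ⊆ ⋃ w ∈ A, cylinder n w.2) :
    P ⟨0, v⟩ ≤ ∑' w : A, P w := by
  obtain ⟨B, hBA, hB, hcov⟩ :=
    isCompact_univ.elim_finite_subcover_image (fun w _ => isOpen_cylinder w.2) hA
  have hlen : ∀ w ∈ hB.toFinset, 0 ≤ w.1 ∧ w.1 ≤ 0 + hB.toFinset.sup Sigma.fst :=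
    fun w hw => ⟨w.1.zero_le, by simpa using Finset.le_sup (f := Sigma.fst) hw⟩
  calc P ⟨0, v⟩ ≤ ∑ w ∈ hB.toFinset, P w :=
        hP.le_sum_of_cover _ 0 v _ hlen (by simpa [cylinder_eq_univ] using hcov)
    _ = ∑' w : B, P w := by rw [← Finset.tsum_subtype', Finite.coe_toFinset]
    _ ≤ ∑' w : A, P w := ENNReal.tsum_mono_subtype P hBA

lemma IsMassDistribution.le_netMeasure_univ [Nonempty (InfWord n)] (hP : IsMassDistribution P)
    (v : Word n 0) : P ⟨0, v⟩ ≤ netMeasure P univ := by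
  rw [netMeasure_apply P MeasurableSet.univ]
  exact le_iSup_of_le 0 <| le_iInf₂ fun A _ => le_iInf fun hA => hP.le_tsum_of_cover v hA

end MassDistribution

section MaxFlow

variable {n : ℕ → ℕ} (c : FinWord n → ℝ≥0∞)

/-- The minimal capacity `c` of a cut separating `v` from the words `r` levels below it. -/
def minCut : ℕ → (j : ℕ) → Word n j → ℝ≥0∞
  | 0, j, v => c ⟨j, v⟩
  | r + 1, j, v => min (c ⟨j, v⟩) (∑ i, minCut r (j + 1) (wSnoc v i))

lemma minCut_le (r j : ℕ) (v : Word n j) : minCut c r j v ≤ c ⟨j, v⟩ := by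
  cases r <;> simp [minCut]

lemma minCut_succ_le_sum (r j : ℕ) (v : Word n j) :
    minCut c (r + 1) j v ≤ ∑ i, minCut c r (j + 1) (wSnoc v i) :=
  min_le_right _ _

lemma minCut_succ_le : ∀ (r j : ℕ) (v : Word n j), minCut c (r + 1) j v ≤ minCut c r j v
  | 0, _, _ => min_le_left _ _
  | r + 1, _, _ => min_le_min le_rfl <| Finset.sum_le_sum fun _ _ => minCut_succ_le r _ _

lemma minCut_ne_top {k₀ : ℕ} (hc : ∀ w : FinWord n, k₀ ≤ w.1 → c w ≠ ⊤) :
    ∀ (r j : ℕ) (v : Word n j), k₀ ≤ j + r → minCut c r j v ≠ ⊤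
  | 0, _, _, h => hc _ h
  | r + 1, j, v, h => ne_top_of_le_ne_top
      (ENNReal.sum_ne_top.2 fun i _ => minCut_ne_top hc r (j + 1) (wSnoc v i) (by omega))
      (minCut_succ_le_sum c r j v)

lemma le_minCut {f : FinWord n → ℝ≥0∞} (hfc : ∀ w, f w ≤ c w)
    (hf : ∀ (j : ℕ) (v : Word n j), f ⟨j, v⟩ ≤ ∑ i, f ⟨j + 1, wSnoc v i⟩) :
    ∀ (r j : ℕ) (v : Word n j), f ⟨j, v⟩ ≤ minCut c r j v
  | 0, _, _ => hfc _
  | r + 1, j, v => le_min (hfc _) <| (hf j v).trans <|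
      Finset.sum_le_sum fun i _ => le_minCut hfc hf r (j + 1) (wSnoc v i)

/-- The flow through `v` when the mass `minCut c K 0` is pushed down the tree to depth `K`,
splitting at each node in proportion to the min-cuts of the children. -/
def flow (K : ℕ) : (j : ℕ) → Word n j → ℝ≥0∞
  | 0, v => minCut c K 0 v
  | j + 1, u => minCut c (K - (j + 1)) (j + 1) u *
      (flow K j (wInit n u) / ∑ i, minCut c (K - (j + 1)) (j + 1) (wSnoc (wInit n u) i))

lemma flow_le_minCut (K : ℕ) :
    ∀ (j : ℕ), j ≤ K → ∀ v : Word n j, flow c K j v ≤ minCut c (K - j) j v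
  | 0, _, _ => le_rfl
  | j + 1, hj, u => by
    have hS : flow c K j (wInit n u) ≤
        ∑ i, minCut c (K - (j + 1)) (j + 1) (wSnoc (wInit n u) i) := by
      refine (flow_le_minCut K j (by omega) _).trans ?_
      rw [show K - j = K - (j + 1) + 1 by omega]
      exact minCut_succ_le_sum c _ _ _
    exact mul_le_of_le_one_right zero_le (ENNReal.div_le_of_le_mul (by simpa using hS))

lemma sum_flow_wSnoc {k₀ : ℕ} (hc : ∀ w : FinWord n, k₀ ≤ w.1 → c w ≠ ⊤) {K j : ℕ}
    (hK : k₀ ≤ K) (hj : j + 1 ≤ K) (v : Word n j) :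
    ∑ i, flow c K (j + 1) (wSnoc v i) = flow c K j v := by
  set S := ∑ i, minCut c (K - (j + 1)) (j + 1) (wSnoc v i)
  have hflow : ∀ i, flow c K (j + 1) (wSnoc v i) =
      minCut c (K - (j + 1)) (j + 1) (wSnoc v i) * (flow c K j v / S) := by
    simp [flow, S]
  have hS : flow c K j v ≤ S := by
    refine (flow_le_minCut c K j (by omega) v).trans ?_
    rw [show K - j = K - (j + 1) + 1 by omega]
    exact minCut_succ_le_sum c _ _ _
  simp_rw [hflow, ← Finset.sum_mul]
  rcases eq_or_ne S 0 with hS0 | hS0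
  · simp [hS0, nonpos_iff_eq_zero.1 (hS.trans_eq hS0)]
  · exact ENNReal.mul_div_cancel hS0 <|
      ENNReal.sum_ne_top.2 fun i _ => minCut_ne_top c hc _ _ _ (by omega)

/-- A limit point of the flows as `K → ∞`, taken along an ultrafilter so that it is
simultaneously a limit for every word. -/
def maxFlow (w : FinWord n) : ℝ≥0∞ :=
  ((Ultrafilter.of (atTop : Filter ℕ)).map fun K => flow c K w.1 w.2).lim

lemma tendsto_flow_maxFlow (w : FinWord n) :
    Tendsto (fun K => flow c K w.1 w.2) (Ultrafilter.of (atTop : Filter ℕ)) (𝓝 (maxFlow c w)) :=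
  Ultrafilter.le_nhds_lim _

lemma eventually_ultrafilter_of_atTop {p : ℕ → Prop} (h : ∀ᶠ K in atTop, p K) :
    ∀ᶠ K in (Ultrafilter.of (atTop : Filter ℕ) : Filter ℕ), p K :=
  h.filter_mono (Ultrafilter.of_le _)

lemma isMassDistribution_maxFlow {k₀ : ℕ} (hc : ∀ w : FinWord n, k₀ ≤ w.1 → c w ≠ ⊤) :
    IsMassDistribution (maxFlow c) := fun j v =>
  tendsto_nhds_unique
    ((tendsto_finsetSum _ fun i _ => tendsto_flow_maxFlow c ⟨j + 1, wSnoc v i⟩).congr' <|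
      eventually_ultrafilter_of_atTop <| (eventually_ge_atTop (max k₀ (j + 1))).mono
        fun _ hK => sum_flow_wSnoc c hc (le_of_max_le_left hK) (le_of_max_le_right hK) v)
    (tendsto_flow_maxFlow c ⟨j, v⟩)

lemma maxFlow_le (w : FinWord n) : maxFlow c w ≤ c w :=
  le_of_tendsto (tendsto_flow_maxFlow c w) <| eventually_ultrafilter_of_atTop <|
    (eventually_ge_atTop w.1).mono fun K hK =>
      (flow_le_minCut c K w.1 hK w.2).trans (minCut_le c _ _ _)

lemma maxFlow_eq_iInf_minCut (v : Word n 0) : maxFlow c ⟨0, v⟩ = ⨅ r, minCut c r 0 v :=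
  tendsto_nhds_unique (tendsto_flow_maxFlow c ⟨0, v⟩) <|
    (tendsto_atTop_iInf (antitone_nat_of_succ_le fun r => minCut_succ_le c r 0 v)).mono_left
      (Ultrafilter.of_le _)

end MaxFlow

theorem exists_measure_cylinder_le {n : ℕ → ℕ} [Nonempty (InfWord n)] (q : FinWord n → ℝ≥0∞)
    (hq : ∀ w, q w ≠ ⊤) (k₀ : ℕ) :
    ∃ μ : Measure (InfWord n), netPremeasure q k₀ univ ≤ μ univ ∧ μ univ < ⊤ ∧
      ∀ (k : ℕ) (u : Word n k), k₀ ≤ k → μ (cylinder n u) ≤ q ⟨k, u⟩ := by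
  classical
  let c (w : FinWord n) : ℝ≥0∞ := if k₀ ≤ w.1 then q w else ⊤
  have hc : ∀ w : FinWord n, k₀ ≤ w.1 → c w ≠ ⊤ := fun w hw => by simp [c, hw, hq]
  have hP := isMassDistribution_maxFlow c hc
  let v₀ : Word n 0 := fun i => i.elim0
  have hroot : ∀ r, netPremeasure q k₀ univ ≤ minCut c r 0 v₀ := by
    rw [← cylinder_eq_univ v₀]
    refine fun r => le_minCut c (f := fun w => netPremeasure q k₀ (cylinder n w.2)) (fun w => ?_)
      (fun j v => netPremeasure_cylinder_le_sum k₀ v) r 0 v₀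
    by_cases hw : k₀ ≤ w.1
    · simpa [c, hw] using netPremeasure_cylinder_le_weight hw w.2
    · simp [c, hw]
  refine ⟨netMeasure (maxFlow c), ?_, ?_, fun k u hk => ?_⟩
  · calc netPremeasure q k₀ univ ≤ maxFlow c ⟨0, v₀⟩ := by
          rw [maxFlow_eq_iInf_minCut]; exact le_iInf hroot
      _ ≤ netMeasure (maxFlow c) univ := hP.le_netMeasure_univ v₀
  · calc netMeasure (maxFlow c) univ = netMeasure (maxFlow c) (cylinder n v₀) := by
          rw [cylinder_eq_univ]
      _ ≤ maxFlow c ⟨0, v₀⟩ := hP.netMeasure_cylinder_le v₀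
      _ ≤ minCut c k₀ 0 v₀ := (maxFlow_eq_iInf_minCut c v₀).trans_le (iInf_le _ _)
      _ < ⊤ := (minCut_ne_top c hc k₀ 0 v₀ (by omega)).lt_top
  · calc netMeasure (maxFlow c) (cylinder n u) ≤ maxFlow c ⟨k, u⟩ := hP.netMeasure_cylinder_le u
      _ ≤ c ⟨k, u⟩ := maxFlow_le c _
      _ = q ⟨k, u⟩ := if_pos hk

lemma exists_le_mul_of_finite {ι : Type*} [Finite ι] {f : ι → ℝ} (hf : ∀ i, 0 < f i) (M : ℝ) :
    ∃ C, 1 ≤ C ∧ ∀ i, M ≤ C * f i := by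
  obtain ⟨b, hb⟩ := (Set.finite_range fun i => M / f i).bddAbove
  exact ⟨max b 1, le_max_right _ _, fun i =>
    (div_le_iff₀ (hf i)).1 ((hb (mem_range_self i)).trans (le_max_left _ _))⟩

section SingularValues

lemma sv_nonneg (d : ℕ) (M : Matrix (Fin d) (Fin d) ℝ) (m : ℕ) : 0 ≤ sv d M m := by
  unfold sv
  split_ifs
  exacts [Real.sqrt_nonneg _, le_rfl]

lemma phi_nonneg (d : ℕ) (M : Matrix (Fin d) (Fin d) ℝ) (s : ℝ) : 0 ≤ phi d M s := by
  unfold phi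
  split_ifs
  · exact zero_le_one
  · exact mul_nonneg (Finset.prod_nonneg fun i _ => sv_nonneg d M i)
      (Real.rpow_nonneg (sv_nonneg d M _) _)
  · exact Real.rpow_nonneg (Finset.prod_nonneg fun i _ => sv_nonneg d M i) _

lemma sv_pos {d : ℕ} {M : Matrix (Fin d) (Fin d) ℝ} (hM : IsUnit M) {m : ℕ} (hm : m < d) :
    0 < sv d M m := by
  have hPD : (Matrix.transpose M * M).PosDef := by
    simpa using Matrix.PosDef.conjTranspose_mul_self M (Matrix.mulVec_injective_iff_isUnit.2 hM)
  rw [sv, dif_pos hm]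
  exact Real.sqrt_pos.2 (hPD.eigenvalues_pos _)

lemma phi_pos {d : ℕ} {M : Matrix (Fin d) (Fin d) ℝ} (hM : IsUnit M) (s : ℝ) : 0 < phi d M s := by
  unfold phi
  split_ifs with hs0 hsd
  · exact one_pos
  · have h1 : 1 ≤ ⌈s⌉₊ := Nat.one_le_ceil_iff.2 (not_le.1 hs0)
    have h2 : ⌈s⌉₊ ≤ d := Nat.ceil_le.2 hsd
    exact mul_pos (Finset.prod_pos fun i hi => sv_pos hM (by simp at hi; omega))
      (Real.rpow_pos_of_pos (sv_pos hM (by omega)) _)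
  · exact Real.rpow_pos_of_pos (Finset.prod_pos fun i hi => sv_pos hM (Finset.mem_range.1 hi)) _

lemma isUnit_Tword {n : ℕ → ℕ} {d : ℕ} {T : ∀ k : ℕ, Fin (n k) → Matrix (Fin d) (Fin d) ℝ}
    (hT : GoodMatrices n T) {k : ℕ} (u : Word n k) : IsUnit (Tword n T u) :=
  List.prod_isUnit fun M hM => by
    obtain ⟨i, rfl⟩ := List.mem_ofFn.1 hM
    exact (Matrix.isUnit_iff_isUnit_det _).2 (isUnit_iff_ne_zero.2 (hT.1 i (u i)))

end SingularValues

theorem exists_frostman_measure_general (d : ℕ) (n : ℕ → ℕ)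
    (T : ∀ k : ℕ, Fin (n k) → Matrix (Fin d) (Fin d) ℝ) (hT : GoodMatrices n T)
    (s : ℝ) (hpos : 0 < Mnet n T s univ) :
    ∃ μ : Measure (InfWord n), 0 < μ univ ∧ μ univ < ⊤ ∧
      ∃ c : ℝ, 0 < c ∧ ∀ (k : ℕ) (u : Word n k),
        μ (cylinder n u) ≤ ENNReal.ofReal (c * phi d (Tword n T u) s) := by
  let q (w : FinWord n) : ℝ≥0∞ := ENNReal.ofReal (phi d (Tword n T w.2) s)
  obtain ⟨k₀, hk₀⟩ : ∃ k, 0 < netPremeasure q k univ := lt_iSup_iff.1 hpos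
  have : Nonempty (InfWord n) := ⟨(nonempty_of_netPremeasure_pos hk₀).some⟩
  obtain ⟨μ, hμ₀, hμ_top, hμ⟩ := exists_measure_cylinder_le q (fun _ => ENNReal.ofReal_ne_top) k₀
  obtain ⟨C, hC, hshort⟩ := exists_le_mul_of_finite (ι := Σ j : Fin k₀, Word n j)
    (fun w => phi_pos (isUnit_Tword hT w.2) s) (μ univ).toReal
  refine ⟨μ, hk₀.trans_le hμ₀, hμ_top, C, one_pos.trans_le hC, fun k u => ?_⟩
  rcases le_or_gt k₀ k with hk | hk
  · exact (hμ k u hk).trans <| ENNReal.ofReal_le_ofReal <|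
      le_mul_of_one_le_left (phi_nonneg _ _ _) hC
  · calc μ (cylinder n u) ≤ μ univ := measure_mono (subset_univ _)
      _ = ENNReal.ofReal (μ univ).toReal := (ENNReal.ofReal_toReal hμ_top.ne).symm
      _ ≤ ENNReal.ofReal (C * phi d (Tword n T u) s) :=
        ENNReal.ofReal_le_ofReal (hshort ⟨⟨k, hk⟩, u⟩)

/-- **Lemma (Frostman-type measure on the symbolic space).**
Fix `s ≥ 0` and suppose `M^s(Σ^∞) > 0`. Then there exist a Borel measure `μ` on `Σ^∞` with
`0 < μ(Σ^∞) < ∞` and a constant `c > 0` such that `μ(C_u) ≤ c·φ^s(T_u)` for every `u ∈ Σ^*`. -/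
theorem exists_frostman_measure (d : ℕ) (hd : 1 ≤ d) (n : ℕ → ℕ) (hn : ∀ k, 2 ≤ n k)
    (T : ∀ k : ℕ, Fin (n k) → Matrix (Fin d) (Fin d) ℝ) (hT : GoodMatrices n T)
    (s : ℝ) (hs : 0 ≤ s) (hpos : 0 < Mnet n T s univ) :
    ∃ μ : Measure (InfWord n), 0 < μ univ ∧ μ univ < ⊤ ∧
      ∃ c : ℝ, 0 < c ∧ ∀ (k : ℕ) (u : Word n k),
        μ (cylinder n u) ≤ ENNReal.ofReal (c * phi d (Tword n T u) s) :=
  exists_frostman_measure_general d n T hT s hpos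

end MoranPaper
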